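/- Linear convergence of randomized Kaczmarz in Bregman distance for f(x) = (1/2)‖x‖₂²: let A ∈ ℝ^{m×n} be nonzero with rows A(1),…,A(m), and Ax = b consistent with minimum-norm solution x̂. Starting from x⁽⁰⁾ ∈ R(Aᵀ), the update x⁽ᵏ⁺¹⁾ = x⁽ᵏ⁾ + (b_{i(k)} − A(i(k))x⁽ᵏ⁾)/‖A(i(k))‖₂² · A(i(k))ᵀ with i(k) chosen independently with Pr(i(k)=j) = ‖A(j)‖₂²/‖A‖_F² satisfies E‖x⁽ᵏ⁾ − x̂‖₂² ≤ (1 − σ_min(A)²/‖A‖_F²)ᵏ ‖x⁽⁰⁾ − x̂‖₂². -/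

import Mathlib

open RealInnerProductSpace

/-- The set of nonzero singular values of the matrix whose rows are `A i`:
`s > 0` such that `s²` is an eigenvalue of `AᵀA`, i.e. of `v ↦ ∑ i ⟪A i, v⟫ • A i`. -/
def nonzeroSingularValues {m n : ℕ} (A : Fin m → EuclideanSpace ℝ (Fin n)) : Set ℝ :=
  {s : ℝ | 0 < s ∧ ∃ v : EuclideanSpace ℝ (Fin n), v ≠ 0 ∧
    (∑ i, ⟪A i, v⟫ • A i) = s ^ 2 • v}

/-- One Kaczmarz step using row `j`: `x ↦ x + (b_j − ⟪A_j, x⟫)/‖A_j‖² · A_jᵀ`. -/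
noncomputable def kacStep {m n : ℕ} (A : Fin m → EuclideanSpace ℝ (Fin n))
    (b : Fin m → ℝ) (j : Fin m) (x : EuclideanSpace ℝ (Fin n)) :
    EuclideanSpace ℝ (Fin n) :=
  x + ((b j - ⟪A j, x⟫) / ‖A j‖ ^ 2) • A j

/-- The Kaczmarz iterate after `k` steps along the index path `w`. -/
noncomputable def kacRun {m n : ℕ} (A : Fin m → EuclideanSpace ℝ (Fin n))
    (b : Fin m → ℝ) (x0 : EuclideanSpace ℝ (Fin n)) {k : ℕ} (w : Fin k → Fin m) :
    EuclideanSpace ℝ (Fin n) :=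
  List.foldl (fun x j => kacStep A b j x) x0 (List.ofFn w)

/-! Each step projects `x` orthogonally onto the hyperplane `⟪A j, ·⟫ = b j`, which contains `x̂`,
so `‖A j‖² ‖x' - x̂‖² = ‖A j‖² ‖x - x̂‖² - ⟪A j, x - x̂⟫²`; averaging over the row law gives
`E ‖x' - x̂‖² = ‖x - x̂‖² - ‖A (x - x̂)‖² / ‖A‖_F²`. The error stays in `R(Aᵀ)`: `x⁽⁰⁾` and the
minimum-norm solution `x̂` lie there, and each step adds a multiple of a row. On `R(Aᵀ)` the
quadratic form of the symmetric operator `AᵀA` is at least `σ_min² ‖·‖²`, because every eigenvector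
not orthogonal to `R(Aᵀ)` has a positive eigenvalue, i.e. the square of a nonzero singular value.
Hence each step contracts the expected squared error by `1 - σ_min² / ‖A‖_F²`, and conditioning on
the first index iterates this over `k` independent steps. -/

section IteratedRandomMap

variable {ι X : Type*} [Fintype ι]

/-- `E[V(xₖ)]` for `xᵢ₊₁ = f jᵢ xᵢ` with indices `jᵢ` drawn i.i.d. with law `p`. -/
noncomputable def iterExpectation (p : ι → ℝ) (f : ι → X → X) (V : X → ℝ) (x₀ : X) (k : ℕ) : ℝ :=
  ∑ w : Fin k → ι, (∏ i, p (w i)) * V (List.foldl (fun x j => f j x) x₀ (List.ofFn w))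

theorem iterExpectation_succ (p : ι → ℝ) (f : ι → X → X) (V : X → ℝ) (x₀ : X) (k : ℕ) :
    iterExpectation p f V x₀ (k + 1) = ∑ j, p j * iterExpectation p f V (f j x₀) k := by
  rw [iterExpectation, ← (Fin.consEquiv fun _ : Fin (k + 1) => ι).sum_comp,
    Fintype.sum_prod_type]
  refine Finset.sum_congr rfl fun j _ => ?_
  rw [iterExpectation, Finset.mul_sum]
  refine Finset.sum_congr rfl fun t _ => ?_
  simp only [Fin.consEquiv_apply, Fin.prod_univ_succ, Fin.cons_zero, Fin.cons_succ,
    List.ofFn_succ, List.foldl_cons, mul_assoc]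

theorem iterExpectation_le_pow_mul {p : ι → ℝ} (hp : ∀ j, 0 ≤ p j) {f : ι → X → X}
    {V : X → ℝ} {S : Set X} (hS : ∀ j, ∀ x ∈ S, f j x ∈ S) {ρ : ℝ} (hρ : 0 ≤ ρ)
    (hV : ∀ x ∈ S, ∑ j, p j * V (f j x) ≤ ρ * V x) (k : ℕ) {x₀ : X} (hx₀ : x₀ ∈ S) :
    iterExpectation p f V x₀ k ≤ ρ ^ k * V x₀ := by
  induction k generalizing x₀ with
  | zero => simp [iterExpectation]
  | succ k ih =>
    calc iterExpectation p f V x₀ (k + 1)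
        = ∑ j, p j * iterExpectation p f V (f j x₀) k := iterExpectation_succ p f V x₀ k
      _ ≤ ∑ j, p j * (ρ ^ k * V (f j x₀)) :=
        Finset.sum_le_sum fun j _ => mul_le_mul_of_nonneg_left (ih (hS j x₀ hx₀)) (hp j)
      _ = ρ ^ k * ∑ j, p j * V (f j x₀) := by
        rw [Finset.mul_sum]; exact Finset.sum_congr rfl fun j _ => by ring
      _ ≤ ρ ^ k * (ρ * V x₀) := mul_le_mul_of_nonneg_left (hV x₀ hx₀) (pow_nonneg hρ k)
      _ = ρ ^ (k + 1) * V x₀ := by ring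

end IteratedRandomMap

theorem LinearMap.IsSymmetric.mul_norm_sq_le_inner_apply_self {E : Type*}
    [NormedAddCommGroup E] [InnerProductSpace ℝ E] [FiniteDimensional ℝ E]
    {T : E →ₗ[ℝ] E} (hT : T.IsSymmetric) {c : ℝ} {w : E}
    (hc : ∀ μ v, v ≠ 0 → T v = μ • v → ⟪w, v⟫ ≠ 0 → c ≤ μ) :
    c * ‖w‖ ^ 2 ≤ ⟪T w, w⟫ := by
  set B := hT.eigenvectorBasis rfl
  set μ := hT.eigenvalues rfl
  have hB : ∀ i, T (B i) = μ i • B i := fun i => hT.apply_eigenvectorBasis rfl i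
  have hnorm : ‖w‖ ^ 2 = ∑ i, ⟪w, B i⟫ ^ 2 := by
    rw [← real_inner_self_eq_norm_sq, ← B.sum_inner_mul_inner w w]
    exact Finset.sum_congr rfl fun i _ => by rw [real_inner_comm (B i) w, sq]
  have hquad : ⟪T w, w⟫ = ∑ i, μ i * ⟪w, B i⟫ ^ 2 := by
    rw [← B.sum_inner_mul_inner (T w) w]
    refine Finset.sum_congr rfl fun i _ => ?_
    rw [hT w (B i), hB i, real_inner_smul_right, real_inner_comm (B i) w]
    ring
  rw [hnorm, hquad, Finset.mul_sum]
  refine Finset.sum_le_sum fun i _ => ?_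
  by_cases hwi : ⟪w, B i⟫ = 0
  · simp [hwi]
  · exact mul_le_mul_of_nonneg_right (hc _ _ (B.orthonormal.ne_zero i) (hB i) hwi) (sq_nonneg _)

theorem Submodule.mem_of_forall_norm_le_norm_sub {E : Type*} [NormedAddCommGroup E]
    [InnerProductSpace ℝ E] (K : Submodule ℝ E) [K.HasOrthogonalProjection] {x : E}
    (h : ∀ y ∈ Kᗮ, ‖x‖ ≤ ‖x - y‖) : x ∈ K := by
  have hle := h _ (K.sub_starProjection_mem_orthogonal x)
  rw [sub_sub_cancel] at hle
  exact (K.mem_iff_norm_starProjection x).2 (le_antisymm (K.norm_starProjection_apply_le x) hle)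

section Kaczmarz

variable {m n : ℕ} (A : Fin m → EuclideanSpace ℝ (Fin n))

/-- `AᵀA` for the matrix `A` with rows `A i`. -/
noncomputable def gramOp : EuclideanSpace ℝ (Fin n) →ₗ[ℝ] EuclideanSpace ℝ (Fin n) where
  toFun v := ∑ i, ⟪A i, v⟫ • A i
  map_add' x y := by simp only [inner_add_right, add_smul, Finset.sum_add_distrib]
  map_smul' c x := by simp only [inner_smul_right, smul_smul, Finset.smul_sum, RingHom.id_apply]

theorem gramOp_apply (v : EuclideanSpace ℝ (Fin n)) : gramOp A v = ∑ i, ⟪A i, v⟫ • A i := rfl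

theorem gramOp_isSymmetric : (gramOp A).IsSymmetric := fun x y => by
  simp only [gramOp_apply, sum_inner, inner_sum, real_inner_smul_left, real_inner_smul_right,
    real_inner_comm x, mul_comm]

theorem inner_gramOp_self (w : EuclideanSpace ℝ (Fin n)) :
    ⟪gramOp A w, w⟫ = ∑ j, ⟪A j, w⟫ ^ 2 := by
  simp only [gramOp_apply, sum_inner, real_inner_smul_left, sq]

theorem inner_eq_zero_of_forall_inner_eq_zero {v w : EuclideanSpace ℝ (Fin n)}
    (hv : ∀ j, ⟪A j, v⟫ = 0) (hw : w ∈ Submodule.span ℝ (Set.range A)) : ⟪w, v⟫ = 0 := by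
  induction hw using Submodule.span_induction with
  | mem y hy => obtain ⟨j, rfl⟩ := hy; exact hv j
  | zero => exact inner_zero_left _
  | add y z _ _ hy hz => rw [inner_add_left, hy, hz, add_zero]
  | smul c y _ hy => rw [real_inner_smul_left, hy, mul_zero]

theorem sqrt_mem_nonzeroSingularValues {μ : ℝ} {v w : EuclideanSpace ℝ (Fin n)} (hv : v ≠ 0)
    (hμ : gramOp A v = μ • v) (hw : w ∈ Submodule.span ℝ (Set.range A)) (hwv : ⟪w, v⟫ ≠ 0) :
    √μ ∈ nonzeroSingularValues A := by
  have hμv : μ * ‖v‖ ^ 2 = ∑ j, ⟪A j, v⟫ ^ 2 := by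
    rw [← inner_gramOp_self, hμ, real_inner_smul_left, real_inner_self_eq_norm_sq]
  have hv2 : 0 < ‖v‖ ^ 2 := by positivity
  -- `ker (AᵀA) ⊥ R(Aᵀ)`, so `μ = 0` would force `⟪w, v⟫ = 0`.
  have hμ0 : 0 < μ := by
    by_contra! hμ0
    have hsum : ∑ j, ⟪A j, v⟫ ^ 2 = 0 :=
      le_antisymm (hμv ▸ mul_nonpos_of_nonpos_of_nonneg hμ0 hv2.le) (by positivity)
    refine hwv (inner_eq_zero_of_forall_inner_eq_zero A (fun j => ?_) hw)
    exact pow_eq_zero_iff two_ne_zero |>.1 <|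
      (Finset.sum_eq_zero_iff_of_nonneg fun j _ => sq_nonneg _).1 hsum j (Finset.mem_univ j)
  exact ⟨Real.sqrt_pos.2 hμ0, v, hv, by rw [← gramOp_apply, hμ, Real.sq_sqrt hμ0.le]⟩

theorem sq_le_sum_norm_sq_of_mem_nonzeroSingularValues {σ : ℝ}
    (hσ : σ ∈ nonzeroSingularValues A) : σ ^ 2 ≤ ∑ j, ‖A j‖ ^ 2 := by
  obtain ⟨-, v, hv, hσv⟩ := hσ
  have hv2 : 0 < ‖v‖ ^ 2 := by positivity
  refine le_of_mul_le_mul_right ?_ hv2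
  calc σ ^ 2 * ‖v‖ ^ 2 = ∑ j, ⟪A j, v⟫ ^ 2 := by
        rw [← inner_gramOp_self, gramOp_apply, hσv, real_inner_smul_left,
          real_inner_self_eq_norm_sq]
    _ ≤ ∑ j, ‖A j‖ ^ 2 * ‖v‖ ^ 2 := Finset.sum_le_sum fun j _ => by
        rw [← mul_pow, ← sq_abs]
        exact pow_le_pow_left₀ (abs_nonneg _) (abs_real_inner_le_norm _ _) 2
    _ = (∑ j, ‖A j‖ ^ 2) * ‖v‖ ^ 2 := (Finset.sum_mul ..).symm

theorem sq_mul_norm_sq_le_sum_inner_sq {σ : ℝ}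
    (hσ : σ ∈ nonzeroSingularValues A ∧ ∀ s ∈ nonzeroSingularValues A, σ ≤ s)
    {w : EuclideanSpace ℝ (Fin n)} (hw : w ∈ Submodule.span ℝ (Set.range A)) :
    σ ^ 2 * ‖w‖ ^ 2 ≤ ∑ j, ⟪A j, w⟫ ^ 2 := by
  rw [← inner_gramOp_self]
  refine (gramOp_isSymmetric A).mul_norm_sq_le_inner_apply_self fun μ v hv hμ hwv => ?_
  have hsqrt := sqrt_mem_nonzeroSingularValues A hv hμ hw hwv
  calc σ ^ 2 ≤ √μ ^ 2 := pow_le_pow_left₀ hσ.1.1.le (hσ.2 _ hsqrt) 2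
    _ = μ := Real.sq_sqrt (Real.sqrt_pos.1 hsqrt.1).le

variable {A} {b : Fin m → ℝ} {xhat : EuclideanSpace ℝ (Fin n)}

theorem sq_norm_mul_norm_kacStep_sub_sq (hb : ∀ i, ⟪A i, xhat⟫ = b i) (j : Fin m)
    (x : EuclideanSpace ℝ (Fin n)) :
    ‖A j‖ ^ 2 * ‖kacStep A b j x - xhat‖ ^ 2
      = ‖A j‖ ^ 2 * ‖x - xhat‖ ^ 2 - ⟪A j, x - xhat⟫ ^ 2 := by
  rcases eq_or_ne (A j) 0 with hj | hj
  · simp [hj]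
  have hAj : ‖A j‖ ^ 2 ≠ 0 := by positivity
  have hstep :
      kacStep A b j x - xhat = (x - xhat) - (⟪A j, x - xhat⟫ / ‖A j‖ ^ 2) • A j := by
    have hres : b j - ⟪A j, x⟫ = -⟪A j, x - xhat⟫ := by rw [inner_sub_right, hb j]; ring
    rw [kacStep, hres, neg_div, neg_smul]
    abel
  rw [hstep, norm_sub_sq_real, real_inner_smul_right, norm_smul, mul_pow, Real.norm_eq_abs,
    sq_abs, real_inner_comm]
  field_simp
  ring

theorem minNormSolution_mem_span (hxhat : (∀ i, ⟪A i, xhat⟫ = b i) ∧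
      ∀ x, (∀ i, ⟪A i, x⟫ = b i) → ‖xhat‖ ≤ ‖x‖) :
    xhat ∈ Submodule.span ℝ (Set.range A) := by
  refine Submodule.mem_of_forall_norm_le_norm_sub _ fun y hy => hxhat.2 _ fun i => ?_
  rw [inner_sub_right, hxhat.1 i, (Submodule.mem_orthogonal _ y).1 hy _
    (Submodule.subset_span ⟨i, rfl⟩), sub_zero]

theorem kacStep_mem_span (j : Fin m) {x : EuclideanSpace ℝ (Fin n)}
    (hx : x ∈ Submodule.span ℝ (Set.range A)) :
    kacStep A b j x ∈ Submodule.span ℝ (Set.range A) :=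
  Submodule.add_mem _ hx (Submodule.smul_mem _ _ (Submodule.subset_span ⟨j, rfl⟩))

theorem sum_mul_norm_kacStep_sub_sq_le (hb : ∀ i, ⟪A i, xhat⟫ = b i) {σ : ℝ}
    (hσ : σ ∈ nonzeroSingularValues A ∧ ∀ s ∈ nonzeroSingularValues A, σ ≤ s)
    {x : EuclideanSpace ℝ (Fin n)} (hx : x - xhat ∈ Submodule.span ℝ (Set.range A)) :
    ∑ j, ‖A j‖ ^ 2 / (∑ j, ‖A j‖ ^ 2) * ‖kacStep A b j x - xhat‖ ^ 2
      ≤ (1 - σ ^ 2 / (∑ j, ‖A j‖ ^ 2)) * ‖x - xhat‖ ^ 2 := by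
  set F := ∑ j, ‖A j‖ ^ 2
  have hF : 0 < F :=
    (pow_pos hσ.1.1 2).trans_le (sq_le_sum_norm_sq_of_mem_nonzeroSingularValues A hσ.1)
  calc ∑ j, ‖A j‖ ^ 2 / F * ‖kacStep A b j x - xhat‖ ^ 2
      = (∑ j, ‖A j‖ ^ 2 * ‖kacStep A b j x - xhat‖ ^ 2) / F := by
        rw [Finset.sum_div]; exact Finset.sum_congr rfl fun j _ => div_mul_eq_mul_div ..
    _ = (F * ‖x - xhat‖ ^ 2 - ∑ j, ⟪A j, x - xhat⟫ ^ 2) / F := by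
        simp only [sq_norm_mul_norm_kacStep_sub_sq hb, Finset.sum_sub_distrib, F,
          Finset.sum_mul]
    _ ≤ (F * ‖x - xhat‖ ^ 2 - σ ^ 2 * ‖x - xhat‖ ^ 2) / F := by
        gcongr; exact sq_mul_norm_sq_le_sum_inner_sq A hσ hx
    _ = (1 - σ ^ 2 / F) * ‖x - xhat‖ ^ 2 := by field_simp

end Kaczmarz

theorem randomized_kaczmarz_linear_convergence_general {m n : ℕ}
    (A : Fin m → EuclideanSpace ℝ (Fin n)) (b : Fin m → ℝ)
    (xhat : EuclideanSpace ℝ (Fin n))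
    (hxhat : (∀ i, ⟪A i, xhat⟫ = b i) ∧
      ∀ x, (∀ i, ⟪A i, x⟫ = b i) → ‖xhat‖ ≤ ‖x‖)
    (σmin : ℝ)
    (hσ : σmin ∈ nonzeroSingularValues A ∧
      ∀ s ∈ nonzeroSingularValues A, σmin ≤ s)
    (x0 : EuclideanSpace ℝ (Fin n))
    (hx0 : x0 ∈ Submodule.span ℝ (Set.range A)) :
    ∀ k : ℕ,
      ∑ w : Fin k → Fin m,
        (∏ i, ‖A (w i)‖ ^ 2 / (∑ j, ‖A j‖ ^ 2)) * ‖kacRun A b x0 w - xhat‖ ^ 2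
      ≤ (1 - σmin ^ 2 / (∑ j, ‖A j‖ ^ 2)) ^ k * ‖x0 - xhat‖ ^ 2 := by
  intro k
  have hσF := sq_le_sum_norm_sq_of_mem_nonzeroSingularValues A hσ.1
  have hρ : 0 ≤ 1 - σmin ^ 2 / ∑ j, ‖A j‖ ^ 2 :=
    sub_nonneg.2 (div_le_one_of_le₀ hσF (hσF.trans' (sq_nonneg _)))
  have hxhat_mem := minNormSolution_mem_span hxhat
  exact iterExpectation_le_pow_mul (p := fun j => ‖A j‖ ^ 2 / ∑ j, ‖A j‖ ^ 2)
    (f := kacStep A b) (V := fun x => ‖x - xhat‖ ^ 2) (fun j => by positivity)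
    (fun j _ hx => kacStep_mem_span j hx) hρ
    (fun x hx => sum_mul_norm_kacStep_sub_sq_le hxhat.1 hσ (Submodule.sub_mem _ hx hxhat_mem))
    k hx0

/-- Linear convergence in expectation of the randomized Kaczmarz method for
`f(x) = ½‖x‖²`: the expectation at step `k`, taken over random i.i.d. row indices
drawn with probabilities `‖A(j)‖²/‖A‖_F²`, is written as a sum over all index
paths `w : Fin k → Fin m` weighted by their probabilities. -/
theorem randomized_kaczmarz_linear_convergence {m n : ℕ}
    (A : Fin m → EuclideanSpace ℝ (Fin n)) (hA : A ≠ 0) (b : Fin m → ℝ)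
    (hcons : ∃ x, ∀ i, ⟪A i, x⟫ = b i)
    (xhat : EuclideanSpace ℝ (Fin n))
    (hxhat : (∀ i, ⟪A i, xhat⟫ = b i) ∧
      ∀ x, (∀ i, ⟪A i, x⟫ = b i) → ‖xhat‖ ≤ ‖x‖)
    (σmin : ℝ)
    (hσ : σmin ∈ nonzeroSingularValues A ∧
      ∀ s ∈ nonzeroSingularValues A, σmin ≤ s)
    (x0 : EuclideanSpace ℝ (Fin n))
    (hx0 : x0 ∈ Submodule.span ℝ (Set.range A)) :
    ∀ k : ℕ,
      ∑ w : Fin k → Fin m,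
        (∏ i, ‖A (w i)‖ ^ 2 / (∑ j, ‖A j‖ ^ 2)) * ‖kacRun A b x0 w - xhat‖ ^ 2
      ≤ (1 - σmin ^ 2 / (∑ j, ‖A j‖ ^ 2)) ^ k * ‖x0 - xhat‖ ^ 2 :=
  randomized_kaczmarz_linear_convergence_general A b xhat hxhat σmin hσ x0 hx0
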